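/- For every a ∈ A and every i ∈ N, the map σ_{i,a} restricts to a bijection from R⁺_a \ {α_{i,a}} onto R⁺_{i▷a} \ {α_{i,i▷a}}, i.e. σ_{i,a}(R⁺_a \ {α_{i,a}}) = R⁺_{i▷a} \ {α_{i,i▷a}}. -/

import Mathlib

open Pointwise

variable {N : Type*} {A : Type*}

/-- The element `(i j)^m ▷ a` for the action of `F₂(N)` on `A`. -/
def altIter (act : N → A → A) (i j : N) (a : A) : ℕ → A
  | 0 => a
  | m + 1 => act i (act j (altIter act i j a m))

/-- The set `Θ(i,j;a)`. -/
def ThetaSet (act : N → A → A) (i j : N) (a : A) : Set A :=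
  {x | ∃ m : ℕ, x = altIter act i j a m ∨ x = altIter act j i a m}

/-- The set of `ℕ₀`-linear combinations of elements of `s`. -/
def NSpan (s : Set (N →₀ ℝ)) : Set (N →₀ ℝ) :=
  (AddSubmonoid.closure s : Set (N →₀ ℝ))

/-- A generalized root system: a transitive action of `F₂(N)` on `A` (axiom (1)),
roots `root a ⊆ ℝ^{(N)}` with simple roots `α n a` forming a basis (axiom (2)),
and maps `σ i a ∈ GL(ℝ^{(N)})`, satisfying axioms (3)-(7). -/
structure GRS (N : Type*) (A : Type*) where
  act : N → A → A
  act_invol : ∀ n a, act n (act n a) = a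
  act_trans : ∀ a b : A, ∃ l : List N, l.foldr act a = b
  root : A → Set (N →₀ ℝ)
  α : N → A → N →₀ ℝ
  α_mem : ∀ n a, α n a ∈ root a
  α_indep : ∀ a, LinearIndependent ℝ fun n => α n a
  α_span : ∀ a, Submodule.span ℝ (Set.range fun n => α n a) = ⊤
  σ : N → A → (N →₀ ℝ) ≃ₗ[ℝ] (N →₀ ℝ)
  ax3 : ∀ a, root a =
    root a ∩ NSpan (Set.range fun n => α n a) ∪ -(root a ∩ NSpan (Set.range fun n => α n a))
  ax4 : ∀ i a, (Set.range fun r : ℝ => r • α i a) ∩ root a = {α i a, -α i a}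
  ax5_root : ∀ i a, ⇑(σ i a) '' root a = root (act i a)
  ax5_diag : ∀ i a, σ i a (α i a) = -α i (act i a)
  ax5_off : ∀ i a j, j ≠ i →
    ∃ m : ℕ, σ i a (α j a) = α j (act i a) + (m : ℝ) • α i (act i a)
  ax6 : ∀ i a v, σ i (act i a) (σ i a v) = v
  ax7 : ∀ a (i j : N), i ≠ j →
    (root a ∩ {β | ∃ p q : ℕ, β = (p : ℝ) • α i a + (q : ℝ) • α j a}).Finite →
    (ThetaSet act i j a).Finite ∧
      (ThetaSet act i j a).ncard ∣
        (root a ∩ {β | ∃ p q : ℕ, β = (p : ℝ) • α i a + (q : ℝ) • α j a}).ncard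

/-- The positive roots `R⁺_a`. -/
def GRS.pos (G : GRS N A) (a : A) : Set (N →₀ ℝ) :=
  G.root a ∩ NSpan (Set.range fun n => G.α n a)

/-- The target `i₁ ⋯ i_m ▷ a` of the word `(i₁, …, i_m)` at `a`. -/
def GRS.target (G : GRS N A) (l : List N) (a : A) : A :=
  l.foldr G.act a

/-- The σ-composite `σ_{i₁,b₁} ∘ ⋯ ∘ σ_{i_m,b_m}` of the word `(i₁, …, i_m)` at `a`. -/
noncomputable def GRS.wmap (G : GRS N A) : List N → A → (N →₀ ℝ) ≃ₗ[ℝ] (N →₀ ℝ)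
  | [], _ => LinearEquiv.refl ℝ _
  | i :: l, a => (G.wmap l a).trans (G.σ i (G.target l a))

/-- The length `ℓ` of a word at `a`: the minimal length of a word at `a`
with the same target and the same σ-composite. -/
noncomputable def GRS.len (G : GRS N A) (l : List N) (a : A) : ℕ :=
  sInf {m | ∃ l' : List N, l'.length = m ∧
    G.target l' a = G.target l a ∧ G.wmap l' a = G.wmap l a}

/-- A word of length `m` at `a` is reduced if `ℓ = m`. -/
def GRS.Reduced (G : GRS N A) (l : List N) (a : A) : Prop :=
  G.len l a = l.length

/-- `m_{i,j;a} = |R_a ∩ (ℕ₀ α_{i,a} + ℕ₀ α_{j,a})|`. -/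
noncomputable def GRS.mij (G : GRS N A) (i j : N) (a : A) : ℕ :=
  (G.root a ∩ {β | ∃ p q : ℕ, β = (p : ℝ) • G.α i a + (q : ℝ) • G.α j a}).ncard

/-- The alternating word `(i₁, …, i_m)` with `i_k = i` for `k` odd (leftmost letter `i`). -/
def altList (i j : N) : ℕ → List N
  | 0 => []
  | m + 1 => i :: altList j i m

/-- The alternating word of length `m` in the letters `i,j` whose rightmost letter is `i`. -/
def altR (i j : N) : ℕ → List N
  | 0 => []
  | m + 1 => altR j i m ++ [i]

/-- `a_m = i_m ⋯ i_1 ▷ a` for the alternating sequence with `i_k = i` for odd `k`. -/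
def aIter (act : N → A → A) (i j : N) (a : A) : ℕ → A
  | 0 => a
  | m + 1 => act (if m % 2 = 0 then i else j) (aIter act i j a m)

/-- The set of real roots `R^{re}_a`. -/
def GRS.reroot (G : GRS N A) (a : A) : Set (N →₀ ℝ) :=
  {β | ∃ (b : A) (l : List N) (n : N), G.target l b = a ∧ β = G.wmap l b (G.α n b)}

/-- The word `C(i,j;a)`: alternating of length `m_{i,j;a} - 1` with leftmost letter `i`. -/
noncomputable def GRS.Cword (G : GRS N A) (i j : N) (a : A) : List N :=
  altList i j (G.mij i j a - 1)

/-! A positive root `β ≠ α_i` has a positive coordinate `β_j` with `j ≠ i`: otherwise it would be a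
multiple of `α_i`, hence `±α_i` by axiom (4). Since `σ_{i,a}` only changes the `α_i`-coordinate,
`σ_{i,a} β` keeps that positive coordinate, so it is a positive root by axiom (3), and it is not
`α_i`, because `σ_{i,a}⁻¹ α_i = -α_i` is negative. The same holds for `σ_{i,i▷a} = σ_{i,a}⁻¹`. -/

namespace Module.Basis

variable {ι R M : Type*} [Semiring R] [AddCommMonoid M] [Module R M] (b : Basis ι R M)

theorem eq_repr_smul_of_repr_eq_zero {v : M} {i : ι} (hv : ∀ j ≠ i, b.repr v j = 0) :
    v = b.repr v i • b i := by
  apply b.repr.injective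
  ext j
  by_cases hj : j = i
  · simp [hj]
  · simp [hv j hj, Finsupp.single_eq_of_ne hj]

theorem repr_nonneg_of_mem_closure_range [PartialOrder R] [IsOrderedRing R] {v : M}
    (hv : v ∈ AddSubmonoid.closure (Set.range b)) (n : ι) : 0 ≤ b.repr v n := by
  induction hv using AddSubmonoid.closure_induction with
  | mem x hx =>
    obtain ⟨m, rfl⟩ := hx
    rw [repr_self]
    exact Finsupp.single_nonneg.2 zero_le_one n
  | zero => simp
  | add x y _ _ hx hy => simpa using add_nonneg hx hy

end Module.Basis

namespace GRS

variable (G : GRS N A)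

noncomputable def basis (a : A) : Module.Basis N ℝ (N →₀ ℝ) :=
  Module.Basis.mk (G.α_indep a) (G.α_span a).ge

theorem basis_apply (a : A) (n : N) : G.basis a n = G.α n a :=
  Module.Basis.mk_apply _ _ _

@[simp]
theorem repr_α (a : A) (n : N) : (G.basis a).repr (G.α n a) = Finsupp.single n 1 := by
  rw [← basis_apply, Module.Basis.repr_self]

theorem range_basis (a : A) : Set.range (G.basis a) = Set.range fun n => G.α n a :=
  congrArg Set.range (funext (G.basis_apply a))

theorem repr_nonneg_of_mem_pos {a : A} {β : N →₀ ℝ} (hβ : β ∈ G.pos a) (n : N) :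
    0 ≤ (G.basis a).repr β n :=
  (G.basis a).repr_nonneg_of_mem_closure_range (G.range_basis a ▸ hβ.2) n

theorem neg_α_notMem_pos (a : A) (i : N) : -G.α i a ∉ G.pos a :=
  fun h => absurd (G.repr_nonneg_of_mem_pos h i) (by norm_num)

theorem repr_σ_of_ne (a : A) {i j : N} (hj : j ≠ i) (v : N →₀ ℝ) :
    (G.basis (G.act i a)).repr (G.σ i a v) j = (G.basis a).repr v j := by
  suffices ((G.basis (G.act i a)).coord j).comp (G.σ i a : (N →₀ ℝ) →ₗ[ℝ] (N →₀ ℝ)) =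
      (G.basis a).coord j from LinearMap.congr_fun this v
  refine (G.basis a).ext fun n => ?_
  rw [basis_apply]
  by_cases hn : n = i
  · subst hn
    simp [G.ax5_diag, Finsupp.single_eq_of_ne hj]
  · obtain ⟨m, hm⟩ := G.ax5_off i a n hn
    simp [hm, Finsupp.single_eq_of_ne hj]

theorem eq_α_of_mem_pos_of_repr_eq_zero {a : A} {i : N} {β : N →₀ ℝ} (hβ : β ∈ G.pos a)
    (hzero : ∀ j ≠ i, (G.basis a).repr β j = 0) : β = G.α i a := by
  have hline : β ∈ (Set.range fun r : ℝ => r • G.α i a) ∩ G.root a :=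
    ⟨⟨_, (G.basis_apply a i ▸ (G.basis a).eq_repr_smul_of_repr_eq_zero hzero).symm⟩, hβ.1⟩
  rw [G.ax4] at hline
  rcases hline with h | h
  · exact h
  · exact absurd (h ▸ hβ) (G.neg_α_notMem_pos a i)

theorem σ_mem_pos {a : A} {i : N} {β : N →₀ ℝ} (hβ : β ∈ G.pos a) (hne : β ≠ G.α i a) :
    G.σ i a β ∈ G.pos (G.act i a) := by
  have hroot : G.σ i a β ∈ G.root (G.act i a) := G.ax5_root i a ▸ Set.mem_image_of_mem _ hβ.1
  rcases (G.ax3 (G.act i a)).subset hroot with hpos | hneg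
  · exact hpos
  refine absurd (G.eq_α_of_mem_pos_of_repr_eq_zero hβ fun j hj => ?_) hne
  have hle : (G.basis a).repr β j ≤ 0 := by
    simpa [G.repr_σ_of_ne a hj] using G.repr_nonneg_of_mem_pos hneg j
  exact le_antisymm hle (G.repr_nonneg_of_mem_pos hβ j)

theorem σ_ne_α {a : A} {i : N} {β : N →₀ ℝ} (hβ : β ∈ G.pos a) :
    G.σ i a β ≠ G.α i (G.act i a) := by
  intro h
  have hβ' : β = -G.α i a := by
    rw [← G.ax6 i a β, h, G.ax5_diag, G.act_invol]
  exact G.neg_α_notMem_pos a i (hβ' ▸ hβ)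

theorem mapsTo_σ (a : A) (i : N) :
    Set.MapsTo (G.σ i a) (G.pos a \ {G.α i a}) (G.pos (G.act i a) \ {G.α i (G.act i a)}) :=
  fun _ ⟨hβ, hne⟩ => ⟨G.σ_mem_pos hβ hne, G.σ_ne_α hβ⟩

theorem σ_σ_act (a : A) (i : N) (v : N →₀ ℝ) : G.σ i a (G.σ i (G.act i a) v) = v := by
  simpa only [G.act_invol] using G.ax6 i (G.act i a) v

end GRS

theorem stmt0_general (G : GRS N A) (a : A) (i : N) :
    ⇑(G.σ i a) '' (G.pos a \ {G.α i a}) =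
      G.pos (G.act i a) \ {G.α i (G.act i a)} := by
  have hback := G.mapsTo_σ (G.act i a) i
  rw [G.act_invol] at hback
  exact (Set.InvOn.bijOn ⟨fun v _ => G.ax6 i a v, fun v _ => G.σ_σ_act a i v⟩
    (G.mapsTo_σ a i) hback).image_eq

/-- `σ_{i,a}` restricts to a bijection from `R⁺_a \ {α_{i,a}}`
onto `R⁺_{i▷a} \ {α_{i,i▷a}}`. -/
theorem stmt0 [Nonempty N] [Nonempty A] (G : GRS N A) (a : A) (i : N) :
    ⇑(G.σ i a) '' (G.pos a \ {G.α i a}) =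
      G.pos (G.act i a) \ {G.α i (G.act i a)} :=
  stmt0_general G a i
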